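/- arXiv:1809.06543 — 7 statements merged into one kernel-verified Lean document; each statement's English description precedes it below -/
import Mathlib

section
/- Let p be a prime, f_1, ..., f_r ∈ ℤ[x_1, ..., x_n], and α_1, ..., α_r positive integers with Σ_{j=1}^r (p^{α_j} - 1)·deg(f_j) < n. If there exists a ∈ {0,1}^n with f_j(a) ≡ 0 (mod p^{α_j}) for all j, then there exist at least two distinct such points in {0,1}^n. -/
/-!
Suppose `a` were the only solution. Modulo `p`, the integer `Ring.choose (N - 1) (p ^ α - 1)`
is `1` when `p ^ α ∣ N` and `0` otherwise, since `Ring.choose · k` is `p ^ α`-periodic mod `p`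
for `k < p ^ α` (Chu–Vandermonde). Multiplied by `(p ^ α - 1)!`, it becomes the value of a
polynomial of degree `p ^ α - 1` in `N`, so `∏ⱼ Ring.choose (fⱼ(x) - 1) (p ^ αⱼ - 1)` is, up to
a nonzero constant, the value of a polynomial of total degree `< n`. Its signed sum over the
cube `{0,1}ⁿ` therefore vanishes, while modulo `p` only the term at `a` survives, and it is `±1`.
-/

open Finset MvPolynomial

section Cube

variable {σ R : Type*} [Fintype σ] [DecidableEq σ]

def zeroOneCube (σ R : Type*) [Fintype σ] [DecidableEq σ] [Zero R] [One R] [DecidableEq R] :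
    Finset (σ → R) :=
  Fintype.piFinset fun _ => {0, 1}

lemma mem_zeroOneCube [Zero R] [One R] [DecidableEq R] {x : σ → R} :
    x ∈ zeroOneCube σ R ↔ ∀ i, x i = 0 ∨ x i = 1 := by
  simp [zeroOneCube]

/-- On the cube this is `(-1) ^ #{i | x i = 1}`. -/
def cubeSign [CommRing R] (x : σ → R) : R :=
  ∏ i, (1 - 2 * x i)

lemma cubeSign_mul_self [CommRing R] [DecidableEq R] {x : σ → R} (hx : x ∈ zeroOneCube σ R) :
    cubeSign x * cubeSign x = 1 := by
  rw [cubeSign, ← prod_mul_distrib]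
  refine prod_eq_one fun i _ => ?_
  rcases mem_zeroOneCube.1 hx i with h | h <;> norm_num [h]

lemma sum_zeroOneCube_cubeSign_mul_monomial_eq_zero [CommRing R] [DecidableEq R] {d : σ → ℕ}
    (hd : ∃ i, d i = 0) : ∑ x ∈ zeroOneCube σ R, cubeSign x * ∏ i, x i ^ d i = 0 := by
  rcases subsingleton_or_nontrivial R with _ | _
  · exact Subsingleton.elim _ _
  obtain ⟨i₀, hi₀⟩ := hd
  simp_rw [cubeSign, ← prod_mul_distrib]
  rw [zeroOneCube, ← prod_univ_sum (fun _ => {0, 1}) fun i t => (1 - 2 * t) * t ^ d i]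
  exact prod_eq_zero (mem_univ i₀) (by simp [hi₀])

theorem sum_zeroOneCube_cubeSign_mul_eval_eq_zero [CommRing R] [DecidableEq R]
    (P : MvPolynomial σ R) (hP : P.totalDegree < Fintype.card σ) :
    ∑ x ∈ zeroOneCube σ R, cubeSign x * eval x P = 0 := by
  simp_rw [eval_eq', mul_sum]
  rw [sum_comm]
  refine sum_eq_zero fun d hd => ?_
  simp_rw [mul_left_comm _ (coeff d P), ← mul_sum]
  refine mul_eq_zero_of_right _ (sum_zeroOneCube_cubeSign_mul_monomial_eq_zero ?_)
  by_contra! h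
  have hcard : Fintype.card σ ≤ ∑ i, d i := by
    simpa using card_nsmul_le_sum univ d 1 fun i _ => Nat.one_le_iff_ne_zero.2 (h i)
  have hdeg := le_totalDegree hd
  rw [Finsupp.sum_fintype _ _ fun _ => rfl] at hdeg
  omega

end Cube

lemma MvPolynomial.totalDegree_prod_sub_C_le {σ R ι : Type*} [CommRing R] (s : Finset ι)
    (g : MvPolynomial σ R) (c : ι → R) :
    (∏ i ∈ s, (g - C (c i))).totalDegree ≤ #s * g.totalDegree := by
  refine (totalDegree_finsetProd _ _).trans ?_
  simpa using sum_le_sum fun i (_ : i ∈ s) => totalDegree_sub_C_le g (c i)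

lemma Int.prod_range_sub_succ_eq_factorial_mul_choose (v : ℤ) (k : ℕ) :
    ∏ i ∈ Finset.range k, (v - ((i : ℤ) + 1)) = k.factorial * Ring.choose (v - 1) k := by
  have h := Ring.descPochhammer_eq_factorial_smul_choose (v - 1) k
  rw [← Polynomial.eval_eq_smeval, descPochhammer_eval_eq_prod_range, nsmul_eq_mul] at h
  rw [← h]
  exact prod_congr rfl fun i _ => by ring

lemma Int.periodic_cast_choose_zmod {p : ℕ} (hp : p.Prime) (α : ℕ) {k : ℕ} (hk : k < p ^ α) :
    Function.Periodic (fun x : ℤ => ((Ring.choose x k : ℤ) : ZMod p)) ((p : ℤ) ^ α) := by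
  intro x
  dsimp only
  rw [Ring.add_choose_eq k (Commute.all _ _), Int.cast_sum, sum_eq_single (k, 0)]
  · simp
  · rintro ⟨i, j⟩ hij hne
    rw [HasAntidiagonal.mem_antidiagonal] at hij
    have hj : j ≠ 0 := by rintro rfl; simp_all
    have hdvd : p ∣ (p ^ α).choose j := hp.dvd_choose_pow hj (by omega)
    rw [← Nat.cast_pow, Ring.choose_natCast, Int.cast_mul, Int.cast_natCast,
      (ZMod.natCast_eq_zero_iff _ _).2 hdvd, mul_zero]
  · simp

lemma Int.cast_choose_sub_one_prime_pow {p : ℕ} (hp : p.Prime) (α : ℕ) (N : ℤ) :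
    ((Ring.choose (N - 1) (p ^ α - 1) : ℤ) : ZMod p) = if (p : ℤ) ^ α ∣ N then 1 else 0 := by
  have hP : 0 < p ^ α := pow_pos hp.pos α
  have hper := periodic_cast_choose_zmod hp α (k := p ^ α - 1) (by omega)
  by_cases hN : (p : ℤ) ^ α ∣ N
  · obtain ⟨c, rfl⟩ := hN
    have h : (p : ℤ) ^ α * c - 1 = ((p ^ α - 1 : ℕ) : ℤ) + (c - 1) * (p : ℤ) ^ α := by
      push_cast [Nat.one_le_iff_ne_zero.2 hP.ne']
      ring
    rw [h, if_pos (dvd_mul_right _ _)]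
    exact (hper.int_mul (c - 1) _).trans (by simp [Ring.choose_natCast])
  · have hP' : (0 : ℤ) < (p : ℤ) ^ α := by exact_mod_cast hP
    obtain ⟨m, hm⟩ := Int.eq_ofNat_of_zero_le (Int.emod_nonneg N hP'.ne')
    have hm0 : m ≠ 0 := by
      rintro rfl
      exact hN (Int.dvd_of_emod_eq_zero (by simpa using hm))
    have hmP : m < p ^ α := by exact_mod_cast hm ▸ Int.emod_lt_of_pos N hP'
    have h : N - 1 = ((m - 1 : ℕ) : ℤ) + N / (p : ℤ) ^ α * (p : ℤ) ^ α := by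
      have := Int.emod_add_mul_ediv N ((p : ℤ) ^ α)
      push_cast [Nat.one_le_iff_ne_zero.2 hm0]
      linarith
    rw [h, if_neg hN]
    exact (hper.int_mul _ _).trans
      (by simp [Ring.choose_natCast, Nat.choose_eq_zero_of_lt (by omega : m - 1 < p ^ α - 1)])

theorem brink_zero_one_general (p : ℕ) (hp : p.Prime) (n r : ℕ)
    (f : Fin r → MvPolynomial (Fin n) ℤ) (α : Fin r → ℕ)
    (hdeg : ∑ j, (p ^ α j - 1) * (f j).totalDegree < n)
    (a : Fin n → ℤ) (ha : ∀ i, a i = 0 ∨ a i = 1)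
    (hz : ∀ j, (p : ℤ) ^ α j ∣ MvPolynomial.eval a (f j)) :
    ∃ b : Fin n → ℤ, b ≠ a ∧ (∀ i, b i = 0 ∨ b i = 1) ∧
      ∀ j, (p : ℤ) ^ α j ∣ MvPolynomial.eval b (f j) := by
  by_contra! hcon
  have := Fact.mk hp
  have hsum : ∑ x ∈ zeroOneCube (Fin n) ℤ,
      cubeSign x * ∏ j, Ring.choose (eval x (f j) - 1) (p ^ α j - 1) = 0 := by
    let Q := ∏ j, ∏ i ∈ range (p ^ α j - 1), (f j - C ((i : ℤ) + 1))
    have hQ : Q.totalDegree < Fintype.card (Fin n) := by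
      rw [Fintype.card_fin]
      refine lt_of_le_of_lt ?_ hdeg
      exact (totalDegree_finsetProd _ _).trans
        (sum_le_sum fun j _ => (totalDegree_prod_sub_C_le _ (f j) _).trans_eq (by rw [card_range]))
    have h := sum_zeroOneCube_cubeSign_mul_eval_eq_zero Q hQ
    simp only [Q, map_prod, map_sub, eval_C, Int.prod_range_sub_succ_eq_factorial_mul_choose] at h
    simp_rw [prod_mul_distrib, mul_left_comm (cubeSign _), ← mul_sum] at h
    exact (mul_eq_zero.1 h).resolve_left (prod_ne_zero_iff.2 fun j _ => by positivity)
  have hmod := congrArg (Int.cast : ℤ → ZMod p) hsum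
  simp only [Int.cast_sum, Int.cast_mul, Int.cast_prod, Int.cast_zero,
    Int.cast_choose_sub_one_prime_pow hp] at hmod
  rw [sum_eq_single_of_mem a (mem_zeroOneCube.2 ha) ?_] at hmod
  · simp only [if_pos (hz _), prod_const_one, mul_one] at hmod
    have hsign := congrArg (Int.cast : ℤ → ZMod p) (cubeSign_mul_self (mem_zeroOneCube.2 ha))
    rw [Int.cast_mul, hmod, zero_mul, Int.cast_one] at hsign
    exact zero_ne_one hsign
  · intro x hx hxa
    obtain ⟨j, hj⟩ := hcon x hxa (mem_zeroOneCube.1 hx)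
    exact mul_eq_zero_of_right _ (prod_eq_zero (mem_univ j) (if_neg hj))

/-- Brink's theorem for 0-1 points: if `∑ (p^{αⱼ}-1)·deg fⱼ < n`, a solution of
`fⱼ(a) ≡ 0 (mod p^{αⱼ})` with `a ∈ {0,1}ⁿ` is never unique. -/
theorem brink_zero_one (p : ℕ) (hp : p.Prime) (n r : ℕ)
    (f : Fin r → MvPolynomial (Fin n) ℤ) (α : Fin r → ℕ) (hα : ∀ j, 0 < α j)
    (hdeg : ∑ j, (p ^ α j - 1) * (f j).totalDegree < n)
    (a : Fin n → ℤ) (ha : ∀ i, a i = 0 ∨ a i = 1)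
    (hz : ∀ j, (p : ℤ) ^ α j ∣ MvPolynomial.eval a (f j)) :
    ∃ b : Fin n → ℤ, b ≠ a ∧ (∀ i, b i = 0 ∨ b i = 1) ∧
      ∀ j, (p : ℤ) ^ α j ∣ MvPolynomial.eval b (f j) :=
  brink_zero_one_general p hp n r f α hdeg a ha hz
end

section
/- Let H be a finite set, k a nonnegative integer, p a prime, and G = ℤ/p^{α_1}ℤ ⊕ ... ⊕ ℤ/p^{α_r}ℤ a finite abelian p-group. For a function φ from the set P_k(H) of subsets of H of size at most k to G, define φ̄(U) = Σ_{X ⊆ U, |X| ≤ k} φ(X) for U ⊆ H. Then there exists a subset U ⊆ H with |U| ≤ k·Σ_{j=1}^r (p^{α_j} - 1) such that φ̄(U) = φ̄(H). -/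
/-!
Write `N_j(U) ∈ ℕ` for the sum of the representatives in `[0, p^{α_j})` of the `j`-th coordinates
of `φ(X)`, `X ⊆ U`, so that `φ̄(U) = φ̄(H)` iff `N_j(U) ≡ N_j(H) mod p^{α_j}` for all `j`, i.e. iff
the base-`p` digits `N_j(U) / p^i mod p ≡ C(N_j(U), p^i)` (Lucas) agree for `i < α_j`.
Viewed as a function of the indicator vector of `U`, `C(N_j(U), p^i)` is a multilinear polynomial
of degree at most `k p^i` (Vandermonde), so by Fermat the indicator that all these digits agree with
those at `H` is a multilinear polynomial over `𝔽_p` of degree at most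
`(p - 1) Σ_j Σ_{i < α_j} k p^i = k Σ_j (p^{α_j} - 1)`. It is `1` at `H`, and a multilinear
polynomial of degree at most `D` that does not vanish at `H` does not vanish at some `U` with
`|U| ≤ D` (Möbius inversion).
-/

open Finset

section

variable {H R : Type*}

/-- `g` agrees on the Boolean cube `{0,1}^H` with a multilinear polynomial of degree at most `D`,
whose coefficient of `∏_{x ∈ T} X_x` is `c T`. -/
def MultilinearDegreeLE [AddCommMonoid R] (g : Finset H → R) (D : ℕ) : Prop :=
  ∃ c : Finset H → R, (∀ T : Finset H, D < T.card → c T = 0) ∧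
    ∀ U : Finset H, g U = ∑ T ∈ U.powerset, c T

namespace MultilinearDegreeLE

section AddCommMonoid

variable [AddCommMonoid R] {g h : Finset H → R} {D D' : ℕ}

theorem mono (hg : MultilinearDegreeLE g D) (hD : D ≤ D') : MultilinearDegreeLE g D' := by
  obtain ⟨c, hc, hgc⟩ := hg
  exact ⟨c, fun T hT => hc T (hD.trans_lt hT), hgc⟩

theorem add (hg : MultilinearDegreeLE g D) (hh : MultilinearDegreeLE h D) :
    MultilinearDegreeLE (fun U => g U + h U) D := by
  obtain ⟨c, hc, hgc⟩ := hg
  obtain ⟨d, hd, hhd⟩ := hh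
  exact ⟨c + d, fun T hT => by simp [hc T hT, hd T hT],
    fun U => by simp only [hgc, hhd, Pi.add_apply, sum_add_distrib]⟩

end AddCommMonoid

theorem sub [AddCommGroup R] {g h : Finset H → R} {D : ℕ} (hg : MultilinearDegreeLE g D)
    (hh : MultilinearDegreeLE h D) : MultilinearDegreeLE (fun U => g U - h U) D := by
  obtain ⟨c, hc, hgc⟩ := hg
  obtain ⟨d, hd, hhd⟩ := hh
  exact ⟨c - d, fun T hT => by simp [hc T hT, hd T hT],
    fun U => by simp only [hgc, hhd, Pi.sub_apply, sum_sub_distrib]⟩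

variable [DecidableEq H]

section AddCommMonoid

variable [AddCommMonoid R] {g : Finset H → R} {D : ℕ}

theorem ite_subset (W : Finset H) (r : R) :
    MultilinearDegreeLE (fun U => if W ⊆ U then r else 0) W.card := by
  refine ⟨fun T => if T = W then r else 0, fun T hT => if_neg ?_, fun U => ?_⟩
  · rintro rfl
    exact hT.false
  · simp only [sum_ite_eq', mem_powerset]

theorem const (r : R) : MultilinearDegreeLE (fun _ : Finset H => r) 0 := by
  simpa using ite_subset (∅ : Finset H) r

theorem sum {ι : Type*} (s : Finset ι) {f : ι → Finset H → R}
    (hf : ∀ i ∈ s, MultilinearDegreeLE (f i) D) :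
    MultilinearDegreeLE (fun U => ∑ i ∈ s, f i U) D := by
  classical
  induction s using Finset.induction_on with
  | empty => simpa using (const (0 : R)).mono (Nat.zero_le D)
  | insert a s ha ih =>
    simp only [sum_insert ha]
    exact (hf a (mem_insert_self a s)).add (ih fun i hi => hf i (mem_insert_of_mem hi))

/-- Möbius inversion: if `g` vanished on all `U ⊆ V` with `|U| ≤ D`, then all coefficients `c T`,
`T ⊆ V`, would vanish, hence so would `g V`. -/
theorem exists_subset_card_le_ne_zero (hg : MultilinearDegreeLE g D) {V : Finset H}
    (hV : g V ≠ 0) : ∃ U ⊆ V, U.card ≤ D ∧ g U ≠ 0 := by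
  by_contra! hsmall
  obtain ⟨c, hc, hgc⟩ := hg
  have hcV : ∀ T ⊆ V, c T = 0 := by
    intro T
    induction T using Finset.strongInduction with
    | H T ih =>
      intro hTV
      rcases le_or_gt T.card D with hTD | hTD
      · have hgT := hgc T
        rw [hsmall T hTV hTD, ← add_sum_erase _ _ (mem_powerset_self T),
          sum_eq_zero fun S hS => ih S ?_ ?_, add_zero] at hgT
        · exact hgT.symm
        · exact Finset.ssubset_iff_subset_ne.2
            ⟨mem_powerset.1 (mem_of_mem_erase hS), ne_of_mem_erase hS⟩
        · exact (mem_powerset.1 (mem_of_mem_erase hS)).trans hTV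
      · exact hc T hTD
  exact hV (by rw [hgc]; exact sum_eq_zero fun T hT => hcV T (mem_powerset.1 hT))

end AddCommMonoid

section Semiring

variable [Semiring R] {g h : Finset H → R} {D E : ℕ}

/-- The coefficient of `X_T` in the product is `Σ_{A ∪ B = T} c A * d B`. -/
theorem mul (hg : MultilinearDegreeLE g D) (hh : MultilinearDegreeLE h E) :
    MultilinearDegreeLE (fun U => g U * h U) (D + E) := by
  obtain ⟨c, hc, hgc⟩ := hg
  obtain ⟨d, hd, hhd⟩ := hh
  refine ⟨fun T => ∑ A ∈ T.powerset, ∑ B ∈ T.powerset, if A ∪ B = T then c A * d B else 0,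
    fun T hT => sum_eq_zero fun A _ => sum_eq_zero fun B _ => ite_eq_right_iff.2 ?_,
    fun U => ?_⟩
  · rintro rfl
    rcases Nat.lt_or_ge D A.card with hA | hA
    · rw [hc A hA, zero_mul]
    · rw [hd B (by have := card_union_le A B; omega), mul_zero]
  · have hcoeff : ∀ T ∈ U.powerset,
        (∑ A ∈ T.powerset, ∑ B ∈ T.powerset, if A ∪ B = T then c A * d B else 0) =
          ∑ A ∈ U.powerset, ∑ B ∈ U.powerset, if A ∪ B = T then c A * d B else 0 := by
      intro T hT
      have hTU : T.powerset ⊆ U.powerset := powerset_mono.2 (mem_powerset.1 hT)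
      rw [sum_subset hTU fun A _ hA => sum_eq_zero fun B _ => ite_eq_right_iff.2
        fun (hAB : A ∪ B = T) => absurd (mem_powerset.2 (hAB ▸ subset_union_left)) hA]
      refine sum_congr rfl fun A _ => sum_subset hTU fun B _ hB => ite_eq_right_iff.2
        fun (hAB : A ∪ B = T) => absurd (mem_powerset.2 (hAB ▸ subset_union_right)) hB
    show g U * h U = _
    rw [hgc, hhd, sum_mul_sum, eq_comm, sum_congr rfl hcoeff, sum_comm]
    refine sum_congr rfl fun A hA => ?_
    rw [sum_comm]
    refine sum_congr rfl fun B hB => ?_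
    rw [sum_ite_eq, if_pos (mem_powerset.2 (union_subset (mem_powerset.1 hA) (mem_powerset.1 hB)))]

theorem pow (hg : MultilinearDegreeLE g D) (m : ℕ) :
    MultilinearDegreeLE (fun U => g U ^ m) (m * D) := by
  induction m with
  | zero => simpa using const (1 : R)
  | succ m ih => simpa only [pow_succ, Nat.succ_mul] using ih.mul hg

end Semiring

theorem prod [CommSemiring R] {ι : Type*} (s : Finset ι) {f : ι → Finset H → R} {D : ι → ℕ}
    (hf : ∀ i ∈ s, MultilinearDegreeLE (f i) (D i)) :
    MultilinearDegreeLE (fun U => ∏ i ∈ s, f i U) (∑ i ∈ s, D i) := by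
  classical
  induction s using Finset.induction_on with
  | empty => simpa using const (1 : R)
  | insert a s ha ih =>
    simp only [prod_insert ha, sum_insert ha]
    exact (hf a (mem_insert_self a s)).mul (ih fun i hi => hf i (mem_insert_of_mem hi))

section Choose

variable [Semiring R]

theorem natCast_choose_ite_subset (T : Finset H) (n i : ℕ) :
    MultilinearDegreeLE (fun U => (((if T ⊆ U then n else 0).choose i : ℕ) : R)) (T.card * i) := by
  cases i with
  | zero => simpa using (const (1 : R)).mono (Nat.zero_le _)
  | succ i =>
    have hfun : (fun U => (((if T ⊆ U then n else 0).choose (i + 1) : ℕ) : R)) =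
        fun U => if T ⊆ U then (n.choose (i + 1) : R) else 0 := by
      funext U
      split_ifs <;> simp
    rw [hfun]
    exact (ite_subset T _).mono (Nat.le_mul_of_pos_right _ i.succ_pos)

/-- Induction on `S`: Vandermonde's identity `C(a + b, m) = Σ_{i + j = m} C(a, i) C(b, j)` reduces
the step to the single-set case. -/
theorem natCast_choose_sum_ite_subset (S : Finset (Finset H)) (ψ : Finset H → ℕ) {k : ℕ}
    (hS : ∀ T ∈ S, T.card ≤ k) (m : ℕ) :
    MultilinearDegreeLE
      (fun U => (((∑ T ∈ S, if T ⊆ U then ψ T else 0).choose m : ℕ) : R)) (k * m) := by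
  induction S using Finset.induction_on generalizing m with
  | empty => simpa using (const ((Nat.choose 0 m : ℕ) : R)).mono (Nat.zero_le _)
  | insert T S hT ih =>
    simp only [sum_insert hT, Nat.add_choose_eq, Nat.cast_sum, Nat.cast_mul]
    refine sum _ fun ij hij => ((natCast_choose_ite_subset T (ψ T) ij.1).mul
      (ih (fun T' hT' => hS T' (mem_insert_of_mem hT')) ij.2)).mono ?_
    rw [← mem_antidiagonal.1 hij, mul_add]
    exact Nat.add_le_add_right (Nat.mul_le_mul_right _ (hS T (mem_insert_self T S))) _

end Choose

end MultilinearDegreeLE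

/-- By Fermat, `∏ i, (1 - (f i U - f i V) ^ (q - 1))` is the indicator of `∀ i, f i U = f i V`. -/
theorem exists_subset_card_le_forall_eq_of_multilinearDegreeLE [DecidableEq H] {K : Type*}
    [Field K] [Fintype K] {ι : Type*} (s : Finset ι) {f : ι → Finset H → K} {D : ι → ℕ}
    (hf : ∀ i ∈ s, MultilinearDegreeLE (f i) (D i)) (V : Finset H) :
    ∃ U ⊆ V, U.card ≤ (Fintype.card K - 1) * ∑ i ∈ s, D i ∧ ∀ i ∈ s, f i U = f i V := by
  set q := Fintype.card K
  have hdeg : MultilinearDegreeLE (fun U => ∏ i ∈ s, (1 - (f i U - f i V) ^ (q - 1)))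
      ((q - 1) * ∑ i ∈ s, D i) := by
    rw [mul_sum]
    refine .prod s fun i hi => ?_
    simpa using ((MultilinearDegreeLE.const 1).mono (Nat.zero_le _)).sub
      (((hf i hi).sub ((MultilinearDegreeLE.const (f i V)).mono (Nat.zero_le _))).pow (q - 1))
  have hq : q - 1 ≠ 0 := by have := Fintype.one_lt_card (α := K); omega
  obtain ⟨U, hUV, hUcard, hU⟩ :=
    hdeg.exists_subset_card_le_ne_zero (V := V) (by simp [zero_pow hq])
  refine ⟨U, hUV, hUcard, fun i hi => ?_⟩
  by_contra hne
  exact hU (prod_eq_zero hi (by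
    rw [FiniteField.pow_card_sub_one_eq_one _ (sub_ne_zero.2 hne), sub_self]))

end

theorem Nat.choose_prime_pow_modEq_div {p : ℕ} (hp : p.Prime) (i n : ℕ) :
    n.choose (p ^ i) ≡ n / p ^ i [MOD p] := by
  have : Fact p.Prime := ⟨hp⟩
  induction i generalizing n with
  | zero => simpa using Nat.ModEq.refl n
  | succ i ih =>
    have hlucas := Choose.choose_modEq_choose_mod_mul_choose_div_nat (n := n) (k := p ^ (i + 1))
      (p := p)
    rw [pow_succ', Nat.mul_mod_right, Nat.mul_div_cancel_left _ hp.pos, Nat.choose_zero_right,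
      one_mul] at hlucas
    rw [pow_succ', ← Nat.div_div_eq_div_mul]
    exact hlucas.trans (ih (n / p))

theorem Nat.modEq_pow_of_forall_div_modEq {p α a b : ℕ}
    (h : ∀ i < α, a / p ^ i ≡ b / p ^ i [MOD p]) : a ≡ b [MOD p ^ α] := by
  induction α with
  | zero => simp [Nat.ModEq, Nat.mod_one]
  | succ α ih =>
    have hlow : a % p ^ α = b % p ^ α := ih fun i hi => h i (by omega)
    have hdigit : a / p ^ α % p = b / p ^ α % p := h α (by omega)
    unfold Nat.ModEq
    rw [Nat.mod_pow_succ, Nat.mod_pow_succ, hlow, hdigit]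

theorem additive_main_general {H : Type*} [Fintype H]
    (k p : ℕ) (hp : p.Prime) (r : ℕ) (α : Fin r → ℕ)
    (φ : Finset H → (∀ j, ZMod (p ^ α j))) :
    ∃ U : Finset H, U.card ≤ k * ∑ j, (p ^ α j - 1) ∧
      ∑ X ∈ U.powerset.filter (fun X => X.card ≤ k), φ X
        = ∑ X ∈ (Finset.univ : Finset H).powerset.filter (fun X => X.card ≤ k), φ X := by
  classical
  have : Fact p.Prime := ⟨hp⟩
  set S : Finset (Finset H) := univ.filter fun X => X.card ≤ k
  set N : Fin r → Finset H → ℕ := fun j U => ∑ X ∈ S, if X ⊆ U then (φ X j).val else 0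
  have hN : ∀ j U, (N j U : ZMod (p ^ α j)) = (∑ X ∈ U.powerset.filter (·.card ≤ k), φ X) j := by
    intro j U
    have : NeZero (p ^ α j) := ⟨pow_ne_zero _ hp.ne_zero⟩
    simp only [N, S, Nat.cast_sum, ZMod.natCast_zmod_val, Finset.sum_apply, ← sum_filter,
      filter_filter]
    exact sum_congr (by ext X; simp [and_comm]) fun _ _ => rfl
  obtain ⟨U, -, hUcard, hU⟩ := exists_subset_card_le_forall_eq_of_multilinearDegreeLE
    (univ.sigma fun j => range (α j)) (V := univ) (D := fun ji => k * p ^ ji.2)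
    (f := fun ji U => (((N ji.1 U).choose (p ^ ji.2) : ℕ) : ZMod p))
    (fun ji _ => .natCast_choose_sum_ite_subset S _ (fun X hX => (mem_filter.1 hX).2) _)
  refine ⟨U, hUcard.trans_eq ?_, funext fun j => ?_⟩
  · rw [ZMod.card, sum_sigma, mul_sum, mul_sum]
    refine sum_congr rfl fun j _ => ?_
    dsimp only
    rw [← mul_sum, mul_left_comm, mul_comm (p - 1), geom_sum_mul_of_one_le hp.one_le]
  · rw [← hN, ← hN, ZMod.natCast_eq_natCast_iff]
    refine Nat.modEq_pow_of_forall_div_modEq fun i hi => ?_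
    have hchoose := (ZMod.natCast_eq_natCast_iff _ _ _).1 (hU ⟨j, i⟩ (by simpa using hi))
    exact (Nat.choose_prime_pow_modEq_div hp i _).symm.trans
      (hchoose.trans (Nat.choose_prime_pow_modEq_div hp i _))

/-- Main additive-combinatorics theorem: for `φ : P_k(H) → ℤ/p^{α₁}ℤ ⊕ ⋯ ⊕ ℤ/p^{α_r}ℤ`
there is `U ⊆ H` with `|U| ≤ k·∑ (p^{αⱼ}-1)` and `φ̄(U) = φ̄(H)`, where
`φ̄(U) = ∑_{X ⊆ U, |X| ≤ k} φ(X)`. -/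
theorem additive_main {H : Type*} [Fintype H] [DecidableEq H]
    (k p : ℕ) (hp : p.Prime) (r : ℕ) (α : Fin r → ℕ) (hα : ∀ j, 0 < α j)
    (φ : Finset H → (∀ j, ZMod (p ^ α j))) :
    ∃ U : Finset H, U.card ≤ k * ∑ j, (p ^ α j - 1) ∧
      ∑ X ∈ U.powerset.filter (fun X => X.card ≤ k), φ X
        = ∑ X ∈ (Finset.univ : Finset H).powerset.filter (fun X => X.card ≤ k), φ X :=
  additive_main_general k p hp r α φ
end

section
/- Let H be a finite set, p a prime, and G = ℤ/p^{α_1}ℤ ⊕ ... ⊕ ℤ/p^{α_r}ℤ. For any function φ : H → G, there exists a subset U ⊆ H with |U| ≤ Σ_{j=1}^r (p^{α_j} - 1) such that Σ_{h ∈ U} φ(h) = Σ_{h ∈ H} φ(h). -/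
/-!
Work in the group algebra `𝔽_p[G]` of `G = ⊕ⱼ ℤ/p^{αⱼ}`. Its augmentation ideal is spanned by the
elements `yⱼ = X^{eⱼ} - 1`, and `yⱼ ^ p^{αⱼ} = X^{p^{αⱼ} eⱼ} - 1 = 0` by the Frobenius, so by
pigeonhole any product of more than `D = ∑ⱼ (p^{αⱼ} - 1)` elements of that ideal vanishes. On the
other hand, if a family `φ` has no nonempty zero-sum subfamily, then `∏ₕ (X^{φ h} - 1)` has
coefficient `±1` at `X^0`. Hence every family of more than `D` elements of `G` has a nonempty
zero-sum subfamily, and deleting such subfamilies shrinks `H` to at most `D` elements without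
changing the total sum.
-/

open Finset

theorem Ideal.prod_eq_zero_of_mem_span_of_pow_eq_zero {R ι H : Type*} [CommRing R] [Fintype ι]
    {y : ι → R} {n : ι → ℕ} (hy : ∀ j, y j ^ n j = 0) {s : Finset H} {x : H → R}
    (hx : ∀ h ∈ s, x h ∈ Ideal.span (Set.range y)) (hs : ∑ j, (n j - 1) < #s) :
    ∏ h ∈ s, x h = 0 := by
  classical
  choose c hc using fun h : s => Ideal.mem_span_range_iff_exists_fun.mp (hx h h.2)
  rw [← prod_coe_sort, prod_congr rfl fun h _ => (hc h).symm, prod_univ_sum]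
  refine sum_eq_zero fun f _ => ?_
  obtain ⟨j, -, hj⟩ : ∃ j ∈ univ, n j - 1 < #{h | f h = j} := by
    refine exists_lt_of_sum_lt ?_
    rwa [← card_eq_sum_card_fiberwise fun h _ => mem_univ (f h), card_univ, Fintype.card_coe]
  rw [prod_mul_distrib, ← prod_fiberwise' univ f y]
  simp only [prod_const]
  exact mul_eq_zero_of_right _ <|
    Finset.prod_eq_zero (mem_univ j) (pow_eq_zero_of_le (by omega) (hy j))

theorem addSubmonoid_closure_range_pi_single_one {ι : Type*} [Fintype ι] [DecidableEq ι]
    (n : ι → ℕ) [∀ j, NeZero (n j)] :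
    AddSubmonoid.closure (Set.range fun j => Pi.single j (1 : ZMod (n j))) = ⊤ := by
  refine eq_top_iff.mpr fun g _ => ?_
  rw [← univ_sum_single g]
  refine AddSubmonoid.sum_mem _ fun j _ => ?_
  rw [← ZMod.natCast_zmod_val (g j), ← nsmul_one, Pi.single_smul]
  exact AddSubmonoid.nsmul_mem _ (AddSubmonoid.subset_closure (Set.mem_range_self j)) _

namespace AddMonoidAlgebra

variable {k G : Type*}

theorem single_sub_one_mem_of_mem_closure [Ring k] [AddMonoid G]
    {I : Ideal (AddMonoidAlgebra k G)} {s : Set G} (hs : ∀ g ∈ s, single g (1 : k) - 1 ∈ I) {g : G}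
    (hg : g ∈ AddSubmonoid.closure s) : single g (1 : k) - 1 ∈ I := by
  induction hg using AddSubmonoid.closure_induction with
  | mem g hg => exact hs g hg
  | zero => simp [← one_def]
  | add g g' _ _ hg hg' =>
    have : single (g + g') (1 : k) - 1 = single g 1 * (single g' 1 - 1) + (single g 1 - 1) := by
      rw [mul_sub, single_mul_single, mul_one, mul_one]; abel
    rw [this]
    exact I.add_mem (I.mul_mem_left _ hg') hg

theorem single_sub_one_pow_eq_zero [CommRing k] [AddMonoid G] {p : ℕ} [Fact p.Prime] [CharP k p]
    {g : G} {n : ℕ} (hg : p ^ n • g = 0) : (single g (1 : k) - 1) ^ p ^ n = 0 := by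
  have := CharP.nontrivial_of_char_ne_one (R := k) (Fact.out : p.Prime).one_lt.ne'
  have := charP_of_injective_algebraMap' k (A := AddMonoidAlgebra k G) p
  rw [sub_pow_char_pow_of_commute _ _ (Commute.one_right _), single_pow, hg, one_pow, one_pow,
    ← one_def, sub_self]

theorem prod_single_sub_one [CommRing k] [AddCommMonoid G] {H : Type*} [DecidableEq H]
    (s : Finset H) (φ : H → G) :
    ∏ h ∈ s, (single (φ h) (1 : k) - 1) =
      ∑ t ∈ s.powerset, single (∑ h ∈ t, φ h) ((-1) ^ #(s \ t)) := by
  simp only [sub_eq_add_neg, prod_add, prod_single, prod_const_one, prod_const]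
  refine sum_congr rfl fun t _ => ?_
  rw [show (-1 : AddMonoidAlgebra k G) = single 0 (-1) by rw [single_neg, ← one_def], single_pow,
    single_mul_single, smul_zero, add_zero, one_mul]

theorem prod_single_sub_one_ne_zero [CommRing k] [Nontrivial k] [AddCommMonoid G] {H : Type*}
    {s : Finset H} {φ : H → G} (hφ : ∀ t ⊆ s, t.Nonempty → ∑ h ∈ t, φ h ≠ 0) :
    ∏ h ∈ s, (single (φ h) (1 : k) - 1) ≠ 0 := by
  classical
  intro h0
  have hcoeff := congr(($h0).coeff 0)
  rw [prod_single_sub_one, coeff_sum, Finsupp.finsetSum_apply,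
    sum_eq_single_of_mem ∅ (empty_mem_powerset s) fun t hts ht => ?_] at hcoeff
  · simp only [sum_empty, sdiff_empty, coeff_single, Finsupp.single_eq_same] at hcoeff
    exact (isUnit_one.neg.pow _).ne_zero hcoeff
  · simp [hφ t (mem_powerset.mp hts) (nonempty_iff_ne_empty.mpr ht)]

end AddMonoidAlgebra

open AddMonoidAlgebra in
theorem exists_nonempty_zero_sum_of_card_lt {ι H : Type*} [Fintype ι] [DecidableEq ι] {p : ℕ}
    [Fact p.Prime] {α : ι → ℕ} (φ : H → ∀ j, ZMod (p ^ α j)) {s : Finset H}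
    (hs : ∑ j, (p ^ α j - 1) < #s) : ∃ t ⊆ s, t.Nonempty ∧ ∑ h ∈ t, φ h = 0 := by
  have : ∀ j, NeZero (p ^ α j) := fun j => ⟨pow_ne_zero _ (Fact.out : p.Prime).ne_zero⟩
  set e : ι → ∀ j, ZMod (p ^ α j) := fun j => Pi.single j 1
  have he : ∀ j, (single (e j) (1 : ZMod p) - 1) ^ p ^ α j = 0 := fun j =>
    single_sub_one_pow_eq_zero <| by
      rw [← Pi.single_smul, nsmul_one, ZMod.natCast_self, Pi.single_zero]
  have hspan : ∀ g, single g (1 : ZMod p) - 1 ∈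
      Ideal.span (Set.range fun j => single (e j) (1 : ZMod p) - 1) :=
    fun g => single_sub_one_mem_of_mem_closure (s := Set.range e)
      (by rintro _ ⟨j, rfl⟩; exact Ideal.subset_span ⟨j, rfl⟩)
      (by rw [addSubmonoid_closure_range_pi_single_one]; exact AddSubmonoid.mem_top g)
  by_contra! hφ
  exact prod_single_sub_one_ne_zero hφ <|
    Ideal.prod_eq_zero_of_mem_span_of_pow_eq_zero he (fun h _ => hspan (φ h)) hs

theorem exists_subset_card_le_sum_eq {H G : Type*} [AddCommMonoid G] {φ : H → G} {D : ℕ}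
    (hD : ∀ s : Finset H, D < #s → ∃ t ⊆ s, t.Nonempty ∧ ∑ h ∈ t, φ h = 0) (s : Finset H) :
    ∃ U ⊆ s, #U ≤ D ∧ ∑ h ∈ U, φ h = ∑ h ∈ s, φ h := by
  classical
  induction s using Finset.strongInduction with
  | H s ih =>
    by_cases hs : #s ≤ D
    · exact ⟨s, subset_rfl, hs, rfl⟩
    obtain ⟨t, hts, ht, ht0⟩ := hD s (not_le.mp hs)
    obtain ⟨U, hU, hUcard, hUsum⟩ := ih (s \ t) (sdiff_ssubset hts ht)
    refine ⟨U, hU.trans sdiff_subset, hUcard, ?_⟩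
    rw [hUsum, ← sum_sdiff hts, ht0, add_zero]

theorem additive_k_one_general {H : Type*} [Fintype H]
    (p : ℕ) (hp : p.Prime) (r : ℕ) (α : Fin r → ℕ)
    (φ : H → (∀ j, ZMod (p ^ α j))) :
    ∃ U : Finset H, U.card ≤ ∑ j, (p ^ α j - 1) ∧
      ∑ h ∈ U, φ h = ∑ h, φ h := by
  have := Fact.mk hp
  obtain ⟨U, -, hU, hsum⟩ :=
    exists_subset_card_le_sum_eq (fun s hs => exists_nonempty_zero_sum_of_card_lt φ hs) univ
  exact ⟨U, hU, hsum⟩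

/-- The `k = 1` case (Olson's theorem form): for `φ : H → ℤ/p^{α₁}ℤ ⊕ ⋯ ⊕ ℤ/p^{α_r}ℤ`
there is `U ⊆ H` with `|U| ≤ ∑ (p^{αⱼ}-1)` and `∑_{h ∈ U} φ(h) = ∑_{h ∈ H} φ(h)`. -/
theorem additive_k_one {H : Type*} [Fintype H] [DecidableEq H]
    (p : ℕ) (hp : p.Prime) (r : ℕ) (α : Fin r → ℕ) (hα : ∀ j, 0 < α j)
    (φ : H → (∀ j, ZMod (p ^ α j))) :
    ∃ U : Finset H, U.card ≤ ∑ j, (p ^ α j - 1) ∧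
      ∑ h ∈ U, φ h = ∑ h, φ h :=
  additive_k_one_general p hp r α φ
end

section
/- The bound in the subset-sum theorem is sharp: let p be a prime, G = ℤ/p^{α_1}ℤ ⊕ ... ⊕ ℤ/p^{α_r}ℤ, k ≥ 1, and H a finite set with |H| ≥ k·Σ_{j=1}^r (p^{α_j} - 1). Then there exists a function φ : P_k(H) → G such that every subset U ⊆ H satisfying φ̄(U) = φ̄(H) has |U| ≥ k·Σ_{j=1}^r (p^{α_j} - 1), where φ̄(U) = Σ_{X ⊆ U, |X| ≤ k} φ(X). -/
/-- Sharpness of the bound: if `|H| ≥ k·∑ (p^{αⱼ}-1)` and `k ≥ 1`, there is a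
`φ : P_k(H) → ℤ/p^{α₁}ℤ ⊕ ⋯ ⊕ ℤ/p^{α_r}ℤ` such that every `U ⊆ H` with
`φ̄(U) = φ̄(H)` satisfies `|U| ≥ k·∑ (p^{αⱼ}-1)`. -/
theorem additive_sharp {H : Type*} [Fintype H] [DecidableEq H]
    (k p : ℕ) (hp : p.Prime) (hk : 1 ≤ k) (r : ℕ) (α : Fin r → ℕ) (hα : ∀ j, 0 < α j)
    (hH : k * ∑ j, (p ^ α j - 1) ≤ Fintype.card H) :
    ∃ φ : Finset H → (∀ j, ZMod (p ^ α j)),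
      ∀ U : Finset H,
        ∑ X ∈ U.powerset.filter (fun X => X.card ≤ k), φ X
          = ∑ X ∈ (Finset.univ : Finset H).powerset.filter (fun X => X.card ≤ k), φ X →
        k * ∑ j, (p ^ α j - 1) ≤ U.card := by
  classical
  set N := ∑ j, (p ^ α j - 1) with hNdef
  have hpow : ∀ j, 0 < p ^ α j := fun j => pow_pos hp.pos _
  haveI : ∀ j, NeZero (p ^ α j) := fun j => ⟨(hpow j).ne'⟩
  -- index type for the blocks
  let T := (j : Fin r) × Fin (p ^ α j - 1)
  have hcardT : Fintype.card T = N := by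
    simp [T, N, Fintype.card_sigma]
  let e : T ≃ Fin N := Fintype.equivFinOfCardEq hcardT
  let g : Fin k × T ≃ Fin (k * N) :=
    (Equiv.prodCongr (Equiv.refl (Fin k)) e).trans finProdFinEquiv
  let F : Fin k × T → H := fun x => (Fintype.equivFin H).symm (Fin.castLE hH (g x))
  have hF : Function.Injective F := by
    intro a b hab
    exact g.injective (Fin.castLE_injective hH ((Fintype.equivFin H).symm.injective hab))
  let B : T → Finset H := fun t => Finset.image (fun m : Fin k => F (m, t)) Finset.univ
  have hFt : ∀ t, Function.Injective (fun m : Fin k => F (m, t)) := fun t a b h => by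
    simpa using congrArg Prod.fst (hF h)
  have hBcard : ∀ t, (B t).card = k := fun t => by
    rw [Finset.card_image_of_injective _ (hFt t), Finset.card_univ, Fintype.card_fin]
  have hBdisj : ∀ t t' : T, t ≠ t' → Disjoint (B t) (B t') := by
    intro t t' htt
    rw [Finset.disjoint_left]
    rintro a ha ha'
    simp only [B, Finset.mem_image, Finset.mem_univ, true_and] at ha ha'
    obtain ⟨m, hm⟩ := ha
    obtain ⟨m', hm'⟩ := ha'
    exact htt (by simpa using congrArg Prod.snd (hF (hm.trans hm'.symm)))
  refine ⟨fun X => ∑ t : T, if X = B t then Pi.single t.1 1 else 0, ?_⟩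
  intro U hU
  -- evaluate φ̄ on any V
  have key : ∀ V : Finset H,
      (∑ X ∈ V.powerset.filter (fun X => X.card ≤ k),
        ∑ t : T, if X = B t then (Pi.single t.1 1 : ∀ j, ZMod (p ^ α j)) else 0)
      = ∑ t : T, if B t ⊆ V then (Pi.single t.1 1 : ∀ j, ZMod (p ^ α j)) else 0 := by
    intro V
    rw [Finset.sum_comm]
    refine Finset.sum_congr rfl fun t _ => ?_
    rw [Finset.sum_ite_eq']
    by_cases h : B t ⊆ V <;>
      simp [h, Finset.mem_filter, Finset.mem_powerset, hBcard t]
  rw [key U, key Finset.univ] at hU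
  -- the coordinate computation
  have coord : ∀ (V : Finset H) (j : Fin r),
      (∑ t : T, if B t ⊆ V then (Pi.single t.1 1 : ∀ j, ZMod (p ^ α j)) else 0) j
        = ((Finset.univ.filter (fun l : Fin (p ^ α j - 1) => B ⟨j, l⟩ ⊆ V)).card
            : ZMod (p ^ α j)) := by
    intro V j
    rw [Finset.sum_apply]
    have : ∀ t : T, (if B t ⊆ V then (Pi.single t.1 1 : ∀ j, ZMod (p ^ α j)) else 0) j
        = if B t ⊆ V then (Pi.single t.1 1 : ∀ j, ZMod (p ^ α j)) j else 0 := by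
      intro t; by_cases h : B t ⊆ V <;> simp [h]
    simp only [this]
    rw [← Finset.univ_sigma_univ, Finset.sum_sigma]
    rw [Finset.sum_eq_single j]
    · rw [← Finset.sum_boole]
      refine Finset.sum_congr rfl fun l _ => ?_
      by_cases h : B ⟨j, l⟩ ⊆ V <;> simp [h, Pi.single_eq_same]
    · intro j' _ hj'
      refine Finset.sum_eq_zero fun l _ => ?_
      by_cases h : B ⟨j', l⟩ ⊆ V <;> simp [h, Pi.single_eq_of_ne hj'.symm]
    · intro h; exact absurd (Finset.mem_univ j) h
  -- from hU : all blocks are contained in U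
  have hall : ∀ t : T, B t ⊆ U := by
    rintro ⟨j, l⟩
    have hj : ((Finset.univ.filter (fun l : Fin (p ^ α j - 1) => B ⟨j, l⟩ ⊆ U)).card
        : ZMod (p ^ α j))
        = ((Finset.univ.filter (fun l : Fin (p ^ α j - 1) =>
            B ⟨j, l⟩ ⊆ (Finset.univ : Finset H))).card : ZMod (p ^ α j)) := by
      rw [← coord U j, ← coord Finset.univ j, hU]
    have htop : (Finset.univ.filter (fun l : Fin (p ^ α j - 1) =>
        B ⟨j, l⟩ ⊆ (Finset.univ : Finset H))) = Finset.univ := by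
      apply Finset.filter_true_of_mem; intro l _; exact Finset.subset_univ _
    rw [htop, Finset.card_univ, Fintype.card_fin] at hj
    set c := (Finset.univ.filter (fun l : Fin (p ^ α j - 1) => B ⟨j, l⟩ ⊆ U)).card with hc
    have hcle : c ≤ p ^ α j - 1 := by
      calc c ≤ (Finset.univ : Finset (Fin (p ^ α j - 1))).card := Finset.card_filter_le _ _
        _ = p ^ α j - 1 := by rw [Finset.card_univ, Fintype.card_fin]
    have hlt : c < p ^ α j := lt_of_le_of_lt hcle (Nat.sub_lt (hpow j) one_pos)
    have hlt' : p ^ α j - 1 < p ^ α j := Nat.sub_lt (hpow j) one_pos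
    have hcval : c = p ^ α j - 1 := by
      have := congrArg ZMod.val hj
      rwa [ZMod.val_natCast_of_lt hlt, ZMod.val_natCast_of_lt hlt'] at this
    have hfilt : (Finset.univ.filter (fun l : Fin (p ^ α j - 1) => B ⟨j, l⟩ ⊆ U))
        = Finset.univ := by
      apply Finset.eq_univ_of_card
      rw [← hc, hcval, Fintype.card_fin]
    have : l ∈ Finset.univ.filter (fun l : Fin (p ^ α j - 1) => B ⟨j, l⟩ ⊆ U) := by
      rw [hfilt]; exact Finset.mem_univ l
    exact (Finset.mem_filter.mp this).2
  -- count
  have hsub : (Finset.univ : Finset T).biUnion B ⊆ U := by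
    intro a ha
    obtain ⟨t, _, ht⟩ := Finset.mem_biUnion.mp ha
    exact hall t ht
  have hcardB : ((Finset.univ : Finset T).biUnion B).card = k * N := by
    rw [Finset.card_biUnion (fun t _ t' _ h => hBdisj t t' h)]
    simp only [hBcard]
    rw [Finset.sum_const, Finset.card_univ, hcardT, smul_eq_mul, Nat.mul_comm]
  calc k * N = ((Finset.univ : Finset T).biUnion B).card := hcardB.symm
    _ ≤ U.card := Finset.card_le_card hsub
end

section
/- Let R be a finite (possibly noncommutative) ring whose additive group is a p-group isomorphic to ℤ/p^{α_1}ℤ ⊕ ... ⊕ ℤ/p^{α_r}ℤ. Let g be an n-variable polynomial over R written as a sum of monomials, each monomial involving at most k distinct variables. If v ∈ R is attained by g at some point (c_1, ..., c_n) ∈ R^n, then v is attained by g at a point (c'_1, ..., c'_n) in which at most k·Σ_{j=1}^r (p^{α_j} - 1) coordinates are nonzero. -/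
/-- An atom of a monomial: a ring constant or a variable. -/
def evalAtom {R : Type} {n : ℕ} [NonUnitalRing R] (c : Fin n → R) : R ⊕ Fin n → R
  | .inl a => a
  | .inr i => c i

/-- Product of a (canonical-form) monomial `z₁ ⋯ z_t`; the empty product is `0`. -/
def evalMonList {R : Type} {n : ℕ} [NonUnitalRing R] (c : Fin n → R) :
    List (R ⊕ Fin n) → R
  | [] => 0
  | [z] => evalAtom c z
  | z :: zs => evalAtom c z * evalMonList c zs

/-- A monomial: a possibly negated product of atoms. -/
structure Mon (R : Type) (n : ℕ) : Type where
  sign : Bool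
  factors : List (R ⊕ Fin n)

/-- Evaluation of a monomial. -/
def Mon.eval {R : Type} {n : ℕ} [NonUnitalRing R] (c : Fin n → R) (m : Mon R n) : R :=
  if m.sign then -(evalMonList c m.factors) else evalMonList c m.factors

/-- The set of distinct variables occurring in a monomial. -/
def Mon.vars {R : Type} {n : ℕ} (m : Mon R n) : Finset (Fin n) :=
  (m.factors.filterMap (fun z => match z with | .inl _ => none | .inr i => some i)).toFinset

/-- A standard polynomial: a formal sum of monomials. -/
abbrev StdPoly (R : Type) (n : ℕ) : Type := List (Mon R n)

/-- Evaluation of a standard polynomial. -/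
def StdPoly.eval {R : Type} {n : ℕ} [NonUnitalRing R] (c : Fin n → R)
    (P : StdPoly R n) : R :=
  (P.map (Mon.eval c)).sum

/-!
Set `G = ⨁ ℤ/p^{αⱼ}ℤ` and `D = ∑ (p^{αⱼ} - 1)`. Killing the coordinates of `c` outside `U`
turns the value into `f U = ∑_{A ⊆ U} w A`, where `w A` is the part of `g(c)` coming from the
monomials with variable set exactly `A`, so `w A = 0` unless `#A ≤ k`. It suffices to find,
whenever `#T > k D`, some `U ⊊ T` with `f U = f T`, and to iterate.

If there were none, then in the group algebra `𝔽_p[G]` the element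
`∑_{U ⊆ T} (-1)^{#U} x^{f U}` would have coefficient `±1` at `x^{f T}`. Writing
`x^{w A} = 1 + y_A` and expanding, it is `±∑ ∏_{A ∈ F} y_A` over the families `F` covering `T`;
such an `F` either has a factor `y_A = 0` or, all its members having at most `k` elements, more
than `D` members. But the augmentation ideal is generated by the `x^{eⱼ} - 1`, whose
`p^{αⱼ}`-th powers vanish, so any product of more than `D` of its elements is `0`.
-/

open Finset

theorem Fintype.prod_comp_eq_zero_of_pow_eq_zero {M ι κ : Type*} [CommMonoidWithZero M]
    [Fintype ι] [Fintype κ] [DecidableEq κ] {t : κ → M} {N : κ → ℕ}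
    (ht : ∀ j, t j ^ N j = 0) (σ : ι → κ) (hσ : ∑ j, (N j - 1) < Fintype.card ι) :
    ∏ i, t (σ i) = 0 := by
  have hcard : Fintype.card ι = ∑ j, #{i | σ i = j} :=
    card_eq_sum_card_fiberwise fun i _ => mem_coe.2 (mem_univ (σ i))
  obtain ⟨j, -, hj⟩ := exists_lt_of_sum_lt (hcard ▸ hσ)
  rw [← Finset.prod_fiberwise univ σ]
  refine prod_eq_zero (mem_univ j) ?_
  rw [Finset.prod_congr rfl fun i hi => by rw [(mem_filter.1 hi).2], Finset.prod_const]
  exact pow_eq_zero_of_le (by omega) (ht j)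

theorem Finset.prod_eq_zero_of_mem_span_range {S ι κ : Type*} [CommRing S] [Fintype κ]
    {t : κ → S} {N : κ → ℕ} (ht : ∀ j, t j ^ N j = 0) {s : Finset ι} {y : ι → S}
    (hy : ∀ i ∈ s, y i ∈ Ideal.span (Set.range t)) (hs : ∑ j, (N j - 1) < #s) :
    ∏ i ∈ s, y i = 0 := by
  classical
  choose u hu using fun i (hi : i ∈ s) => Ideal.mem_span_range_iff_exists_fun.1 (hy i hi)
  rw [← prod_coe_sort, prod_congr rfl fun i _ => (hu i.1 i.2).symm, prod_univ_sum]
  refine sum_eq_zero fun σ _ => ?_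
  rw [prod_mul_distrib, Fintype.prod_comp_eq_zero_of_pow_eq_zero ht σ (by simpa using hs),
    mul_zero]

theorem Finset.sum_Icc_neg_one_pow_card {R ι : Type*} [CommRing R] [DecidableEq ι]
    {B T : Finset ι} (hBT : B ⊆ T) :
    ∑ U ∈ Icc B T, (-1 : R) ^ #U = if B = T then (-1) ^ #T else 0 := by
  have hsum : ∑ V ∈ (T \ B).powerset, (-1 : R) ^ #V = if T \ B = ∅ then 1 else 0 := by
    exact_mod_cast congrArg (Int.cast : ℤ → R) sum_powerset_neg_one_pow_card
  have hdisj : ∀ V ∈ (T \ B).powerset, Disjoint B V := fun V hV =>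
    disjoint_of_subset_right (mem_powerset.1 hV) disjoint_sdiff
  rw [Icc_eq_image_powerset hBT, sum_image fun V₁ h₁ V₂ h₂ h => by
    rw [← union_sdiff_cancel_left (hdisj V₁ h₁), h, union_sdiff_cancel_left (hdisj V₂ h₂)]]
  rw [sum_congr rfl fun V hV => by rw [card_union_of_disjoint (hdisj V hV), pow_add],
    ← mul_sum, hsum]
  by_cases h : B = T
  · subst h; simp
  · rw [if_neg fun h' => h (hBT.antisymm (sdiff_eq_empty_iff_subset.1 h')), if_neg h,
      mul_zero]

theorem Finset.sum_powerset_neg_one_pow_mul_prod_one_add {R ι : Type*} [CommRing R]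
    [DecidableEq ι] (y : Finset ι → R) (T : Finset ι) :
    ∑ U ∈ T.powerset, (-1) ^ #U * ∏ A ∈ U.powerset, (1 + y A) =
      (-1) ^ #T * ∑ F ∈ T.powerset.powerset with F.sup id = T, ∏ A ∈ F, y A := by
  have hsup : ∀ (U : Finset ι) (F : Finset (Finset ι)), F ⊆ U.powerset ↔ F.sup id ⊆ U :=
    fun U F => by simp [subset_iff]
  simp_rw [prod_one_add, mul_sum]
  rw [sum_comm' (t' := T.powerset.powerset) (s' := fun F => Icc (F.sup id) T)]
  · rw [sum_filter]
    refine sum_congr rfl fun F hF => ?_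
    rw [← sum_mul, sum_Icc_neg_one_pow_card ((hsup T F).1 (mem_powerset.1 hF))]
    split_ifs <;> simp
  · intro U F
    simp only [mem_powerset, mem_Icc, hsup]
    exact ⟨fun ⟨hU, hF⟩ => ⟨⟨hF, hU⟩, hF.trans hU⟩, fun ⟨⟨hF, hU⟩, _⟩ => ⟨hU, hF⟩⟩

namespace AddMonoidAlgebra

theorem single_sub_one_mem_span_single_sub_one {K κ : Type*} [CommRing K] [Fintype κ]
    [DecidableEq κ] {n : κ → ℕ} [∀ j, NeZero (n j)] (g : ∀ j, ZMod (n j)) :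
    single g (1 : K) - 1 ∈
      Ideal.span (Set.range fun j => single (Pi.single j 1 : ∀ j, ZMod (n j)) (1 : K) - 1) := by
  set I :=
    Ideal.span (Set.range fun j => single (Pi.single j 1 : ∀ j, ZMod (n j)) (1 : K) - 1)
  have hgen (j : κ) : Ideal.Quotient.mk I (single (Pi.single j 1) 1) = 1 := by
    rw [← map_one (Ideal.Quotient.mk I), Ideal.Quotient.eq]
    exact Ideal.subset_span ⟨j, rfl⟩
  have hg : g = ∑ j, (g j).val • Pi.single j 1 := by
    conv_lhs => rw [← univ_sum_single g]
    refine sum_congr rfl fun j _ => ?_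
    rw [← Pi.single_smul, nsmul_one, ZMod.natCast_zmod_val]
  rw [← Ideal.Quotient.eq, map_one, hg, ← prod_const_one, ← prod_single, map_prod]
  refine prod_eq_one fun j _ => ?_
  rw [← one_pow (M := K) (g j).val, ← single_pow, map_pow, hgen, one_pow]

theorem single_sub_one_pow_char_pow_eq_zero {K G : Type*} [CommRing K] [AddCommMonoid G] (p : ℕ)
    [Fact p.Prime] [CharP K p] {g : G} {a : ℕ} (hg : p ^ a • g = 0) :
    (single g (1 : K) - 1) ^ p ^ a = 0 := by
  have := charP_of_injective_algebraMap' K (A := AddMonoidAlgebra K G) p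
  rw [sub_pow_char_pow, one_pow, single_pow, one_pow, hg, ← one_def, sub_self]

theorem prod_single_sub_one_eq_zero {K ι κ : Type*} [CommRing K] [Fintype κ] [DecidableEq κ]
    {p : ℕ} [Fact p.Prime] [CharP K p] {α : κ → ℕ} {s : Finset ι}
    (g : ι → ∀ j, ZMod (p ^ α j)) (hs : ∑ j, (p ^ α j - 1) < #s) :
    ∏ i ∈ s, (single (g i) (1 : K) - 1) = 0 := by
  refine prod_eq_zero_of_mem_span_range (N := fun j => p ^ α j)
    (fun j => single_sub_one_pow_char_pow_eq_zero p ?_)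
    (fun i _ => single_sub_one_mem_span_single_sub_one (g i)) hs
  rw [← Pi.single_smul, nsmul_one, ZMod.natCast_self, Pi.single_zero]

end AddMonoidAlgebra

section PowersetSums

variable {ι κ : Type*} [DecidableEq ι] [Fintype κ] [DecidableEq κ] {p : ℕ} [Fact p.Prime]
  {α : κ → ℕ}

open AddMonoidAlgebra in
theorem exists_ssubset_sum_powerset_eq (k : ℕ) (w : Finset ι → ∀ j, ZMod (p ^ α j))
    (hw : ∀ A, w A ≠ 0 → #A ≤ k) {T : Finset ι} (hT : k * ∑ j, (p ^ α j - 1) < #T) :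
    ∃ U ⊂ T, ∑ A ∈ U.powerset, w A = ∑ A ∈ T.powerset, w A := by
  by_contra! hne
  set f : Finset ι → ∀ j, ZMod (p ^ α j) := fun U => ∑ A ∈ U.powerset, w A
  set y : Finset ι → AddMonoidAlgebra (ZMod p) (∀ j, ZMod (p ^ α j)) :=
    fun A => single (w A) 1 - 1
  have hprod : ∀ F ∈ T.powerset.powerset, F.sup id = T → ∏ A ∈ F, y A = 0 := by
    intro F hF hFT
    by_cases h0 : ∃ A ∈ F, w A = 0
    · obtain ⟨A, hA, hwA⟩ := h0
      exact prod_eq_zero hA (by simp [y, hwA, one_def])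
    · push Not at h0
      have hcard : #T ≤ k * #F := calc
        #T = #(F.sup id) := by rw [hFT]
        _ ≤ ∑ A ∈ F, #A := by rw [sup_eq_biUnion]; exact card_biUnion_le
        _ ≤ ∑ _ ∈ F, k := sum_le_sum fun A hA => hw A (h0 A hA)
        _ = k * #F := by rw [sum_const, smul_eq_mul, mul_comm]
      exact prod_single_sub_one_eq_zero w (Nat.lt_of_mul_lt_mul_left (hT.trans_le hcard))
  have hZ : ∑ U ∈ T.powerset, single (f U) ((-1 : ZMod p) ^ #U) = 0 := by
    have hf (U : Finset ι) :
        single (f U) ((-1 : ZMod p) ^ #U) = (-1) ^ #U * ∏ A ∈ U.powerset, (1 + y A) := by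
      rw [← mul_one ((-1 : ZMod p) ^ #U), ← smul_single', Algebra.smul_def, map_pow, map_neg,
        map_one]
      simp [y, f, prod_single]
    simp_rw [hf, sum_powerset_neg_one_pow_mul_prod_one_add]
    rw [sum_eq_zero fun F hF => hprod F (mem_filter.1 hF).1 (mem_filter.1 hF).2, mul_zero]
  have hcoeff : (∑ U ∈ T.powerset, single (f U) ((-1 : ZMod p) ^ #U)).coeff (f T) =
      (-1) ^ #T := by
    rw [coeff_sum, Finsupp.finsetSum_apply, sum_eq_single_of_mem T (mem_powerset_self T)]
    · simp [coeff_single]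
    · intro U hU hUT
      simp [coeff_single, f, hne U (ssubset_of_subset_of_ne (mem_powerset.1 hU) hUT)]
  rw [hZ] at hcoeff
  exact pow_ne_zero _ (neg_ne_zero.2 one_ne_zero) hcoeff.symm

theorem exists_subset_card_le_sum_powerset_eq (k : ℕ) (w : Finset ι → ∀ j, ZMod (p ^ α j))
    (hw : ∀ A, w A ≠ 0 → #A ≤ k) (T : Finset ι) :
    ∃ U ⊆ T, #U ≤ k * ∑ j, (p ^ α j - 1) ∧
      ∑ A ∈ U.powerset, w A = ∑ A ∈ T.powerset, w A := by
  induction T using Finset.strongInduction with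
  | H T ih =>
    by_cases hT : #T ≤ k * ∑ j, (p ^ α j - 1)
    · exact ⟨T, subset_rfl, hT, rfl⟩
    · obtain ⟨U, hUT, hU⟩ := exists_ssubset_sum_powerset_eq k w hw (not_le.1 hT)
      obtain ⟨V, hVU, hV, hVU'⟩ := ih U hUT
      exact ⟨V, hVU.trans hUT.subset, hV, hVU'.trans hU⟩

end PowersetSums

section Polynomial

variable {R : Type} {n : ℕ} [NonUnitalRing R]

theorem evalMonList_congr {c c' : Fin n → R} {L : List (R ⊕ Fin n)}
    (h : ∀ i, Sum.inr i ∈ L → c i = c' i) : evalMonList c L = evalMonList c' L := by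
  have hatom : ∀ z ∈ L, evalAtom c z = evalAtom c' z := by
    rintro (a | i) hz
    exacts [rfl, h i hz]
  clear h
  fun_induction evalMonList c L with
  | case1 => rfl
  | case2 z => simp [evalMonList, hatom]
  | case3 z zs hzs ih => simp_all [evalMonList]

theorem evalMonList_eq_zero {c : Fin n → R} {L : List (R ⊕ Fin n)} {i : Fin n}
    (hi : Sum.inr i ∈ L) (h0 : c i = 0) : evalMonList c L = 0 := by
  fun_induction evalMonList c L with
  | case1 => rfl
  | case2 z =>
    obtain rfl := List.mem_singleton.1 hi
    exact h0
  | case3 z zs hzs ih =>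
    rcases List.mem_cons.1 hi with rfl | hi
    · simp [evalAtom, h0]
    · simp [ih hi]

omit [NonUnitalRing R] in
theorem Mon.mem_vars {m : Mon R n} {i : Fin n} : i ∈ m.vars ↔ Sum.inr i ∈ m.factors := by
  simp only [Mon.vars, List.mem_toFinset, List.mem_filterMap]
  constructor
  · rintro ⟨(a | j), hz, hj⟩
    · simp at hj
    · simp_all
  · exact fun h => ⟨Sum.inr i, h, rfl⟩

theorem Mon.eval_piecewise (c : Fin n → R) (U : Finset (Fin n)) (m : Mon R n) :
    m.eval (U.piecewise c 0) = if m.vars ⊆ U then m.eval c else 0 := by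
  split_ifs with hU
  · simp only [Mon.eval]
    rw [evalMonList_congr fun i hi => U.piecewise_eq_of_mem c 0 (hU (Mon.mem_vars.2 hi))]
  · obtain ⟨i, hi, hiU⟩ := not_subset.1 hU
    simp [Mon.eval, evalMonList_eq_zero (Mon.mem_vars.1 hi) (U.piecewise_eq_of_notMem c 0 hiU)]

theorem StdPoly.eval_piecewise (c : Fin n → R) (U : Finset (Fin n)) (g : StdPoly R n) :
    g.eval (U.piecewise c 0) = ∑ A ∈ U.powerset, StdPoly.eval c (g.filter (·.vars = A)) := by
  induction g with
  | nil => simp [StdPoly.eval]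
  | cons m g ih =>
    simp only [StdPoly.eval, List.map_cons, List.sum_cons] at ih ⊢
    have hm : (if m.vars ⊆ U then m.eval c else 0) =
        ∑ A ∈ U.powerset, if m.vars = A then m.eval c else 0 := by
      rw [sum_ite_eq, if_congr mem_powerset.symm rfl rfl]
    rw [ih, Mon.eval_piecewise, hm, ← sum_add_distrib]
    refine sum_congr rfl fun A _ => ?_
    by_cases hA : m.vars = A <;> simp [hA]

theorem StdPoly.eval_filter_vars_eq_of_card_lt (c : Fin n → R) {g : StdPoly R n} {k : ℕ}
    (hg : ∀ m ∈ g, m.vars.card ≤ k) {A : Finset (Fin n)} (hA : k < #A) :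
    StdPoly.eval c (g.filter (·.vars = A)) = 0 := by
  rw [List.filter_eq_nil_iff.2 fun m hm hA' => by
    simp only [decide_eq_true_eq] at hA'
    exact (hg m hm).not_gt (hA' ▸ hA)]
  rfl

end Polynomial

theorem value_attained_on_small_support_general {R : Type} [NonUnitalRing R]
    [DecidableEq R] (p : ℕ) (hp : p.Prime) (r : ℕ) (α : Fin r → ℕ)
    (e : R ≃+ ∀ j, ZMod (p ^ α j))
    (n k : ℕ) (g : StdPoly R n) (hg : ∀ m ∈ g, m.vars.card ≤ k)
    (v : R) (c : Fin n → R) (hv : StdPoly.eval c g = v) :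
    ∃ c' : Fin n → R,
      (Finset.univ.filter fun i => c' i ≠ 0).card ≤ k * ∑ j, (p ^ α j - 1) ∧
      StdPoly.eval c' g = v := by
  have := Fact.mk hp
  set w : Finset (Fin n) → ∀ j, ZMod (p ^ α j) :=
    fun A => e (StdPoly.eval c (g.filter (·.vars = A)))
  have hw (A : Finset (Fin n)) (hA : w A ≠ 0) : #A ≤ k := by
    by_contra! hk
    exact hA (by simp [w, StdPoly.eval_filter_vars_eq_of_card_lt c hg hk])
  obtain ⟨U, -, hUcard, hU⟩ := exists_subset_card_le_sum_powerset_eq k w hw univ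
  refine ⟨U.piecewise c 0, (card_le_card fun i hi => ?_).trans hUcard, e.injective ?_⟩
  · by_contra hiU
    simp [U.piecewise_eq_of_notMem c 0 hiU] at hi
  · rw [StdPoly.eval_piecewise, map_sum, hU, ← map_sum, ← StdPoly.eval_piecewise,
      piecewise_univ, hv]

/-- If the additive group of the finite ring `R` is `ℤ/p^{α₁}ℤ ⊕ ⋯ ⊕ ℤ/p^{α_r}ℤ` and
every monomial of `g` involves at most `k` distinct variables, then every value `v`
attained by `g` is attained at a point with at most `k·∑ (p^{αⱼ}-1)` nonzero
coordinates. -/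
theorem value_attained_on_small_support {R : Type} [NonUnitalRing R] [Fintype R]
    [DecidableEq R] (p : ℕ) (hp : p.Prime) (r : ℕ) (α : Fin r → ℕ) (hα : ∀ j, 0 < α j)
    (e : R ≃+ ∀ j, ZMod (p ^ α j))
    (n k : ℕ) (g : StdPoly R n) (hg : ∀ m ∈ g, m.vars.card ≤ k)
    (v : R) (c : Fin n → R) (hv : StdPoly.eval c g = v) :
    ∃ c' : Fin n → R,
      (Finset.univ.filter fun i => c' i ≠ 0).card ≤ k * ∑ j, (p ^ α j - 1) ∧
      StdPoly.eval c' g = v :=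
  value_attained_on_small_support_general p hp r α e n k g hg v c hv
end

section
/- Let R be a finite ring decomposed as R = R_1 ⊕ ... ⊕ R_s into ideals with pairwise coprime orders, with projections π_i : R → R_i. Let g be an n-variable polynomial over R, and let g_i be the polynomial over R_i obtained from g by replacing each coefficient c by π_i(c). Then the range of g equals the Minkowski sum of the ranges of the g_i, i.e., {g(c) : c ∈ R^n} = {v_1 + ... + v_s : v_i ∈ range(g_i)}. -/
/-- Formal polynomial expressions over `R` in `n` non-commuting variables. -/
inductive RPoly (R : Type) (n : ℕ) : Type
  | var : Fin n → RPoly R n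
  | const : R → RPoly R n
  | neg : RPoly R n → RPoly R n
  | add : RPoly R n → RPoly R n → RPoly R n
  | mul : RPoly R n → RPoly R n → RPoly R n

/-- Evaluation of a polynomial expression at a point of `Rⁿ`. -/
def RPoly.eval {R : Type} {n : ℕ} [NonUnitalRing R] (c : Fin n → R) : RPoly R n → R
  | .var i => c i
  | .const a => a
  | .neg f => - f.eval c
  | .add f g => f.eval c + g.eval c
  | .mul f g => f.eval c * g.eval c

/-- Replace every coefficient (constant) of a polynomial expression by its image
under `σ`. -/
def RPoly.mapConst {R : Type} {n : ℕ} (σ : R → R) : RPoly R n → RPoly R n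
  | .var i => .var i
  | .const a => .const (σ a)
  | .neg f => .neg (f.mapConst σ)
  | .add f g => .add (f.mapConst σ) (g.mapConst σ)
  | .mul f g => .mul (f.mapConst σ) (g.mapConst σ)

/-- If `R = R₁ ⊕ ⋯ ⊕ R_s` is a direct sum of ideals with mutually annihilating
components, given by projections `πᵢ`, then the range of a polynomial `g` over `R`
is the Minkowski sum of the ranges of the polynomials `gᵢ` (obtained from `g` by
applying `πᵢ` to each coefficient) evaluated over `Rᵢⁿ`. -/
theorem range_minkowski_sum {R : Type} [NonUnitalRing R] [Fintype R]
    (s n : ℕ) (π : Fin s → R → R)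
    (hadd : ∀ i, ∀ a b : R, π i (a + b) = π i a + π i b)
    (hmul : ∀ i, ∀ a b : R, π i (a * b) = π i a * π i b)
    (hid : ∀ x : R, ∑ i, π i x = x)
    (hidem : ∀ i, ∀ x : R, π i (π i x) = π i x)
    (horth : ∀ i j, i ≠ j → ∀ x : R, π i (π j x) = 0)
    (hann : ∀ i j, i ≠ j → ∀ a b : R, π i a * π j b = 0)
    (g : RPoly R n) :
    (Set.range fun c : Fin n → R => g.eval c) =
      {x : R | ∃ v : Fin s → R,
        (∀ i, ∃ c : Fin n → R, (∀ t, c t ∈ Set.range (π i)) ∧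
          v i = (g.mapConst (π i)).eval c) ∧
        x = ∑ i, v i} := by
  have hzero : ∀ i, π i 0 = 0 := by
    intro i
    have h := hadd i 0 0
    simp only [add_zero] at h
    exact left_eq_add.mp h
  have hneg : ∀ i (a : R), π i (-a) = -π i a := by
    intro i a
    have h := hadd i a (-a)
    simp only [add_neg_cancel, hzero] at h
    exact (eq_neg_of_add_eq_zero_right h.symm)
  have key : ∀ (f : RPoly R n) (i : Fin s) (c : Fin n → R),
      π i (f.eval c) = (f.mapConst (π i)).eval (fun t => π i (c t)) := by
    intro f i c
    induction f with
    | var t => rfl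
    | const a => rfl
    | neg f ih => simp [RPoly.eval, RPoly.mapConst, hneg i, ih]
    | add f g ihf ihg => simp [RPoly.eval, RPoly.mapConst, hadd i, ihf, ihg]
    | mul f g ihf ihg => simp [RPoly.eval, RPoly.mapConst, hmul i, ihf, ihg]
  ext x
  constructor
  · rintro ⟨c, rfl⟩
    exact ⟨fun i => π i (g.eval c),
      fun i => ⟨fun t => π i (c t), fun t => ⟨c t, rfl⟩, key g i c⟩, (hid _).symm⟩
  · rintro ⟨v, hv, rfl⟩
    choose c hc hv' using hv
    refine ⟨fun t => ∑ j, c j t, ?_⟩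
    have hsum : ∀ i (t : Fin n), π i (∑ j, c j t) = c i t := by
      intro i t
      let φ : R →+ R := { toFun := π i, map_zero' := hzero i, map_add' := hadd i }
      have : π i (∑ j, c j t) = ∑ j, π i (c j t) := map_sum φ _ _
      rw [this, Finset.sum_eq_single i]
      · obtain ⟨a, ha⟩ := hc i t
        rw [← ha, hidem]
      · intro j _ hj
        obtain ⟨a, ha⟩ := hc j t
        rw [← ha, horth i j (Ne.symm hj)]
      · simp
    have : g.eval (fun t => ∑ j, c j t) = ∑ i, v i := by
      conv_lhs => rw [← hid (g.eval _)]
      refine Finset.sum_congr rfl fun i _ => ?_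
      rw [key, hv' i]
      congr 1
      funext t
      exact hsum i t
    simpa using this
end

section
/- Let R be a nilpotent ring of nilpotency class ℓ (i.e., R^{(ℓ)} = 0, where R^{(i)} is the ideal generated by all products of i elements of R). Then every polynomial f over R in variables x_1, ..., x_n is equivalent (defines the same function R^n → R) to a standard polynomial (sum of monomials) in which every monomial contains at most ℓ - 1 distinct variables. -/
/-- Product of a list of ring elements (empty product is `0`). -/
def listProd {R : Type} [NonUnitalRing R] : List R → R
  | [] => 0
  | [a] => a
  | a :: l => a * listProd l

/-- `idealPow R i` is `R⁽ⁱ⁾`: the additive subgroup generated by all products of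
`i` elements of `R`. -/
def idealPow (R : Type) [NonUnitalRing R] (i : ℕ) : AddSubgroup R :=
  AddSubgroup.closure {x | ∃ l : List R, l.length = i ∧ listProd l = x}

section Aux

variable {R : Type} {n : ℕ} [NonUnitalRing R]

lemma evalMonList_cons (c : Fin n → R) (z : R ⊕ Fin n) {l : List (R ⊕ Fin n)} (h : l ≠ []) :
    evalMonList c (z :: l) = evalAtom c z * evalMonList c l := by
  cases l with
  | nil => exact absurd rfl h
  | cons w ws => rfl

lemma evalMonList_append (c : Fin n → R) {l1 l2 : List (R ⊕ Fin n)} (h1 : l1 ≠ [])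
    (h2 : l2 ≠ []) :
    evalMonList c (l1 ++ l2) = evalMonList c l1 * evalMonList c l2 := by
  induction l1 with
  | nil => exact absurd rfl h1
  | cons z zs ih =>
    cases zs with
    | nil =>
      simp only [List.cons_append, List.nil_append]
      rw [evalMonList_cons c z h2]
      rfl
    | cons w ws =>
      have hne : (w :: ws : List (R ⊕ Fin n)) ≠ [] := by simp
      have hne2 : (w :: ws) ++ l2 ≠ [] := by simp
      rw [List.cons_append, evalMonList_cons c z hne2, ih hne,
        evalMonList_cons c z hne, mul_assoc]

lemma listProd_cons (a : R) {l : List R} (h : l ≠ []) :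
    listProd (a :: l) = a * listProd l := by
  cases l with
  | nil => exact absurd rfl h
  | cons b bs => rfl

lemma evalMonList_eq_listProd (c : Fin n → R) (l : List (R ⊕ Fin n)) :
    evalMonList c l = listProd (l.map (evalAtom c)) := by
  induction l with
  | nil => rfl
  | cons z zs ih =>
    cases zs with
    | nil => rfl
    | cons w ws =>
      have hne : (w :: ws : List (R ⊕ Fin n)) ≠ [] := by simp
      have hne' : ((w :: ws).map (evalAtom c)) ≠ [] := by simp
      rw [evalMonList_cons c z hne, List.map_cons, listProd_cons _ hne', ih]

lemma listProd_collapse (ℓ : ℕ) (hℓ : 0 < ℓ) :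
    ∀ (k : ℕ) (l : List R), l.length = k → ℓ ≤ k →
      ∃ l' : List R, l'.length = ℓ ∧ listProd l' = listProd l := by
  intro k
  induction k with
  | zero => intro l hl hk; omega
  | succ k ih =>
    intro l hl hk
    by_cases h : ℓ = k + 1
    · exact ⟨l, by omega, rfl⟩
    · have hk' : ℓ ≤ k := by omega
      have hk2 : 2 ≤ l.length := by omega
      match l, hl with
      | a :: b :: rest, hl =>
        have heq : listProd ((a * b) :: rest) = listProd (a :: b :: rest) := by
          cases rest with
          | nil => rfl
          | cons r rs =>
            have hne : (r :: rs : List R) ≠ [] := by simp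
            have hne2 : (b :: r :: rs : List R) ≠ [] := by simp
            rw [listProd_cons _ hne, listProd_cons _ hne2, listProd_cons _ hne, mul_assoc]
        obtain ⟨l', h1, h2⟩ := ih ((a * b) :: rest) (by simp at hl ⊢; omega) hk'
        exact ⟨l', h1, h2.trans heq⟩

lemma listProd_eq_zero {ℓ : ℕ} (hℓ : 0 < ℓ) (hnil : idealPow R ℓ = ⊥)
    {l : List R} (h : ℓ ≤ l.length) : listProd l = 0 := by
  obtain ⟨l', h1, h2⟩ := listProd_collapse ℓ hℓ l.length l rfl h
  have : listProd l' ∈ idealPow R ℓ := AddSubgroup.subset_closure ⟨l', h1, rfl⟩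
  rw [hnil, AddSubgroup.mem_bot] at this
  rw [← h2, this]

lemma mon_eval_zero {ℓ : ℕ} (hℓ : 0 < ℓ) (hnil : idealPow R ℓ = ⊥)
    (c : Fin n → R) {m : Mon R n} (h : ℓ ≤ m.factors.length) : Mon.eval c m = 0 := by
  have : evalMonList c m.factors = 0 := by
    rw [evalMonList_eq_listProd]
    exact listProd_eq_zero hℓ hnil (by simpa using h)
  unfold Mon.eval
  rw [this]
  simp

/-- Monomial product. -/
def Mon.mul (m m' : Mon R n) : Mon R n := ⟨xor m.sign m'.sign, m.factors ++ m'.factors⟩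

lemma mon_eval_mul (c : Fin n → R) {m m' : Mon R n} (h : m.factors ≠ [])
    (h' : m'.factors ≠ []) : Mon.eval c (Mon.mul m m') = Mon.eval c m * Mon.eval c m' := by
  unfold Mon.eval Mon.mul
  cases hs : m.sign <;> cases hs' : m'.sign <;>
    simp [evalMonList_append c h h', neg_mul, mul_neg]

lemma eval_map_mul (c : Fin n → R) (m : Mon R n) (hm : m.factors ≠ [])
    (Q : StdPoly R n) (hQ : ∀ q ∈ Q, q.factors ≠ []) :
    StdPoly.eval c (Q.map (Mon.mul m)) = Mon.eval c m * StdPoly.eval c Q := by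
  induction Q with
  | nil => simp [StdPoly.eval]
  | cons q Qs ih =>
    have h1 : q.factors ≠ [] := hQ q (by simp)
    have h2 : ∀ q' ∈ Qs, q'.factors ≠ [] := fun q' hq' => hQ q' (by simp [hq'])
    simp only [List.map_cons, StdPoly.eval, List.sum_cons] at *
    rw [ih h2, mon_eval_mul c hm h1, mul_add]

/-- Standard polynomial product. -/
def StdPoly.mul (P Q : StdPoly R n) : StdPoly R n := P.flatMap (fun m => Q.map (Mon.mul m))

lemma eval_mul (c : Fin n → R) (P Q : StdPoly R n) (hP : ∀ m ∈ P, m.factors ≠ [])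
    (hQ : ∀ q ∈ Q, q.factors ≠ []) :
    StdPoly.eval c (StdPoly.mul P Q) = StdPoly.eval c P * StdPoly.eval c Q := by
  induction P with
  | nil => simp [StdPoly.eval, StdPoly.mul]
  | cons m Ps ih =>
    have h1 : m.factors ≠ [] := hP m (by simp)
    have h2 : ∀ m' ∈ Ps, m'.factors ≠ [] := fun m' hm' => hP m' (by simp [hm'])
    simp only [StdPoly.mul, List.flatMap_cons, StdPoly.eval, List.map_append, List.sum_append,
      List.sum_cons, List.map_cons]
    rw [← StdPoly.eval, ← StdPoly.eval, ← StdPoly.eval, ← StdPoly.mul, ih h2,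
      eval_map_mul c m h1 Q hQ, add_mul]
    rfl

lemma eval_neg (c : Fin n → R) (P : StdPoly R n) :
    StdPoly.eval c (P.map (fun m => ⟨!m.sign, m.factors⟩)) = - StdPoly.eval c P := by
  induction P with
  | nil => simp [StdPoly.eval]
  | cons m Ps ih =>
    simp only [List.map_cons, StdPoly.eval, List.sum_cons] at *
    rw [ih]
    have : Mon.eval c ⟨!m.sign, m.factors⟩ = - Mon.eval c m := by
      cases hs : m.sign <;> simp [Mon.eval, hs]
    rw [this, neg_add]

lemma rpolyNormalize (f : RPoly R n) : ∃ P : StdPoly R n,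
    (∀ m ∈ P, m.factors ≠ []) ∧ ∀ c : Fin n → R, StdPoly.eval c P = f.eval c := by
  induction f with
  | var i =>
    exact ⟨[⟨false, [.inr i]⟩], by simp, fun c => by
      simp [StdPoly.eval, Mon.eval, evalMonList, evalAtom, RPoly.eval]⟩
  | const a =>
    exact ⟨[⟨false, [.inl a]⟩], by simp, fun c => by
      simp [StdPoly.eval, Mon.eval, evalMonList, evalAtom, RPoly.eval]⟩
  | neg g ih =>
    obtain ⟨P, hne, hP⟩ := ih
    refine ⟨P.map (fun m => ⟨!m.sign, m.factors⟩), ?_, fun c => ?_⟩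
    · intro m hm
      simp only [List.mem_map] at hm
      obtain ⟨m', hm', rfl⟩ := hm
      exact hne m' hm'
    · rw [eval_neg, hP c]; rfl
  | add g h ihg ihh =>
    obtain ⟨P, hPne, hP⟩ := ihg
    obtain ⟨Q, hQne, hQ⟩ := ihh
    refine ⟨P ++ Q, ?_, fun c => ?_⟩
    · intro m hm
      rcases List.mem_append.mp hm with h | h
      · exact hPne m h
      · exact hQne m h
    · simp only [StdPoly.eval, List.map_append, List.sum_append]
      rw [← StdPoly.eval, ← StdPoly.eval, hP c, hQ c]; rfl
  | mul g h ihg ihh =>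
    obtain ⟨P, hPne, hP⟩ := ihg
    obtain ⟨Q, hQne, hQ⟩ := ihh
    refine ⟨StdPoly.mul P Q, ?_, fun c => ?_⟩
    · intro m hm
      simp only [StdPoly.mul, List.mem_flatMap, List.mem_map] at hm
      obtain ⟨a, ha, b, hb, rfl⟩ := hm
      simp only [Mon.mul, ne_eq, List.append_eq_nil_iff]
      intro ⟨h1, _⟩
      exact hPne a ha h1
    · rw [eval_mul c P Q hPne hQne, hP c, hQ c]; rfl

lemma eval_filter (c : Fin n → R) (p : Mon R n → Bool) (P : StdPoly R n)
    (h : ∀ m ∈ P, p m = false → Mon.eval c m = 0) :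
    StdPoly.eval c (P.filter p) = StdPoly.eval c P := by
  induction P with
  | nil => rfl
  | cons m Ps ih =>
    have h2 : ∀ m' ∈ Ps, p m' = false → Mon.eval c m' = 0 :=
      fun m' hm' => h m' (by simp [hm'])
    cases hp : p m with
    | true =>
      simp only [List.filter_cons, hp, if_true, StdPoly.eval, List.map_cons, List.sum_cons]
      rw [← StdPoly.eval, ← StdPoly.eval, ih h2]
    | false =>
      simp only [List.filter_cons, hp, Bool.false_eq_true, if_false, StdPoly.eval,
        List.map_cons, List.sum_cons]
      rw [← StdPoly.eval, ← StdPoly.eval, ih h2, h m (by simp) hp, zero_add]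

end Aux

/-- In a nilpotent ring of class `ℓ` (so `R⁽ℓ⁾ = 0`), every polynomial expression is
equivalent to a standard polynomial each of whose monomials involves at most `ℓ - 1`
distinct variables. -/
theorem equivalent_standard_polynomial {R : Type} [NonUnitalRing R]
    (ℓ : ℕ) (hℓ : 0 < ℓ) (hnil : idealPow R ℓ = ⊥)
    (n : ℕ) (f : RPoly R n) :
    ∃ P : StdPoly R n, (∀ m ∈ P, m.vars.card ≤ ℓ - 1) ∧
      ∀ c : Fin n → R, StdPoly.eval c P = f.eval c := by
  obtain ⟨P, hne, hP⟩ := rpolyNormalize f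
  refine ⟨P.filter (fun m => decide (m.factors.length < ℓ)), ?_, fun c => ?_⟩
  · intro m hm
    have hmem := List.mem_filter.mp hm
    have hlen : m.factors.length < ℓ := by simpa using hmem.2
    have hv : m.vars.card ≤ m.factors.length :=
      le_trans (List.toFinset_card_le _) (List.length_filterMap_le _ _)
    omega
  · rw [eval_filter c _ P ?_, hP c]
    intro m _ hp
    apply mon_eval_zero hℓ hnil
    simp only [decide_eq_false_iff_not, not_lt] at hp
    exact hp
end
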